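/- arXiv:2304.01317 — 4 statements merged into one kernel-verified Lean document; each statement's English description precedes it below -/
import Mathlib

section
/- Let V be a finite set, S ⊆ V a subset, C ⊆ V a subset, and φ : V \ C → V \ S an injective function. Then for any starting point v₀ ∈ S, the sequence defined by iterating φ (applied whenever the current element is not in C) eventually reaches an element of C; i.e., there exists a finite t such that the t-th iterate lies in C. -/
/-!
If the iteration never reached `C`, the whole orbit of `v₀` would stay in `Cᶜ`, where the step
map is injective. On a finite set a map injective along an orbit makes the starting point periodic,
so `v₀` would be the image of a point outside `C`, i.e. `v₀ ∉ S`.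
-/

open scoped Classical

open Function Set

theorem Set.InjOn.mem_periodicPts {α : Type*} [Finite α] {f : α → α} {s : Set α}
    (hinj : InjOn f s) (hmaps : MapsTo f s s) {x : α} (hx : x ∈ s) : x ∈ periodicPts f := by
  obtain ⟨n, hn, hper⟩ :=
    Function.mem_periodicPts.mp ((hmaps.restrict_inj.mpr hinj).mem_periodicPts ⟨x, hx⟩)
  refine mk_mem_periodicPts hn ?_
  rw [IsPeriodicPt, IsFixedPt, ← hmaps.coe_iterate_restrict ⟨x, hx⟩ n, hper]

theorem mapsTo_range_iterate {α : Type*} (f : α → α) (x : α) :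
    MapsTo f (range fun n => f^[n] x) (range fun n => f^[n] x) := by
  rintro _ ⟨n, rfl⟩
  exact ⟨n + 1, iterate_succ_apply' f n x⟩

theorem exists_iterate_mem_of_injOn_compl {α : Type*} [Finite α] {f : α → α} {S C : Set α}
    (hinj : InjOn f Cᶜ) (hmaps : MapsTo f Cᶜ Sᶜ) {x : α} (hx : x ∈ S) :
    ∃ t, f^[t] x ∈ C := by
  by_contra! hout
  have horbit : (range fun n => f^[n] x) ⊆ Cᶜ := by
    rintro _ ⟨n, rfl⟩
    exact hout n
  obtain ⟨n, hn, hper⟩ := Function.mem_periodicPts.mp <|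
    (hinj.mono horbit).mem_periodicPts (mapsTo_range_iterate f x) (mem_range_self 0)
  obtain ⟨k, rfl⟩ := Nat.exists_eq_succ_of_ne_zero hn.ne'
  have hfx : f (f^[k] x) = x := (iterate_succ_apply' f k x).symm.trans hper
  exact hmaps (hout k) (by rwa [hfx])

/-- Universal iterative encoder convergence: with `V` finite, `S C ⊆ V`,
`φ` mapping `V \ C` into `V \ S` injectively, iterating the step function
(from any `v₀ ∈ S`) eventually reaches `C`. -/
theorem stmt_0 {V : Type*} [Fintype V] (S C : Set V) (φ : V → V)
    (hφS : ∀ v ∉ C, φ v ∉ S) (hφinj : Set.InjOn φ Cᶜ)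
    (v₀ : V) (hv₀ : v₀ ∈ S) :
    ∃ t : ℕ, (fun v => if v ∈ C then v else φ v)^[t] v₀ ∈ C := by
  have hstep : EqOn φ (fun v => if v ∈ C then v else φ v) Cᶜ := fun v hv => (if_neg hv).symm
  refine exists_iterate_mem_of_injOn_compl (hφinj.congr hstep) (fun v hv => ?_) hv₀
  rw [mem_compl_iff, ← hstep hv]
  exact hφS v hv
end

section
/- Let V be a finite set, C ⊆ V, S ⊆ V with S ∩ range(φ) = ∅, and φ : V \ C → V \ S injective. For x ∈ S, let t(x) denote the number of iterations of φ needed starting from x to reach C (finite by termination). Then the orbits starting from distinct elements of S are pairwise disjoint, and consequently ∑_{x ∈ S} t(x) ≤ |V|. -/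
open scoped Classical

/-!
The orbit of `x ∈ S` runs through `Cᶜ`, where the step function is `φ`, until it hits `C`.
Two orbit points `f^[m] x = f^[n] y` can be pulled back one step at a time by injectivity
of `φ` on `Cᶜ`, until one side reaches its starting point in `S`; since `S` misses the range
of `φ`, both sides get there simultaneously, so `m = n` and `x = y`. Hence the pairs `(x, i)`
with `x ∈ S` and `i < t x` embed into `V`.
-/

namespace Function

variable {α : Type*} {f : α → α} {s : Set α} {S : Set α}

theorem iterate_eq_iterate_of_injOn (hS : ∀ v ∈ s, f v ∉ S) (hinj : Set.InjOn f s)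
    {x y : α} (hx : x ∈ S) (hy : y ∈ S) :
    ∀ {m n : ℕ}, (∀ i < m, f^[i] x ∈ s) → (∀ i < n, f^[i] y ∈ s) →
      f^[m] x = f^[n] y → m = n ∧ x = y
  | 0, 0, _, _, h => ⟨rfl, h⟩
  | 0, n + 1, _, hyn, h => by
    rw [iterate_zero_apply, iterate_succ_apply'] at h
    exact absurd (h ▸ hx) (hS _ (hyn n n.lt_succ_self))
  | m + 1, 0, hxm, _, h => by
    rw [iterate_zero_apply, iterate_succ_apply'] at h
    exact absurd (h ▸ hy) (hS _ (hxm m m.lt_succ_self))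
  | m + 1, n + 1, hxm, hyn, h => by
    rw [iterate_succ_apply', iterate_succ_apply'] at h
    obtain ⟨rfl, hxy⟩ := iterate_eq_iterate_of_injOn hS hinj hx hy
      (fun i hi => hxm i (hi.trans m.lt_succ_self)) (fun i hi => hyn i (hi.trans n.lt_succ_self))
      (hinj (hxm m m.lt_succ_self) (hyn n n.lt_succ_self) h)
    exact ⟨rfl, hxy⟩

end Function

theorem Finset.sum_le_card_of_injOn_sigma {ι β : Type*} [Fintype β] (S : Finset ι) (t : ι → ℕ)
    (g : ι → ℕ → β)
    (hg : ∀ x ∈ S, ∀ y ∈ S, ∀ m < t x, ∀ n < t y, g x m = g y n → m = n ∧ x = y) :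
    ∑ x ∈ S, t x ≤ Fintype.card β := by
  have hcard : ∑ x ∈ S, t x = (S.sigma fun x => range (t x)).card := by
    simp [card_sigma]
  rw [hcard, ← card_univ]
  refine card_le_card_of_injOn (fun p => g p.1 p.2) (fun _ _ => mem_univ _) ?_
  rintro ⟨x, m⟩ hxm ⟨y, n⟩ hyn h
  simp only [coe_sigma, Set.mem_sigma_iff, mem_coe, mem_range] at hxm hyn
  obtain ⟨rfl, rfl⟩ := hg x hxm.1 y hyn.1 m hxm.2 n hyn.2 h
  rfl

/-- Universal framework iteration-count bound: with `S` disjoint from the range of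
`φ` on `V \ C` and `φ` injective there, letting `t x` be the (first) hitting time
of `C` for the orbit of the step function started at `x ∈ S`, the orbits of
distinct starting points are pairwise disjoint and `∑ x ∈ S, t x ≤ |V|`. -/
theorem stmt_3 {V : Type*} [Fintype V] (C : Set V) (S : Finset V) (φ : V → V)
    (hφS : ∀ v ∉ C, φ v ∉ S) (hφinj : Set.InjOn φ Cᶜ)
    (t : V → ℕ)
    (ht : ∀ x ∈ S, (fun v => if v ∈ C then v else φ v)^[t x] x ∈ C ∧
      ∀ i < t x, (fun v => if v ∈ C then v else φ v)^[i] x ∉ C) :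
    (∀ x ∈ S, ∀ y ∈ S, x ≠ y → ∀ m ≤ t x, ∀ n ≤ t y,
      (fun v => if v ∈ C then v else φ v)^[m] x ≠
        (fun v => if v ∈ C then v else φ v)^[n] y) ∧
    ∑ x ∈ S, t x ≤ Fintype.card V := by
  set f : V → V := fun v => if v ∈ C then v else φ v
  have hf : Set.EqOn φ f Cᶜ := fun v hv => (if_neg hv).symm
  have hfS : ∀ v ∈ Cᶜ, f v ∉ (S : Set V) := fun v hv => hf hv ▸ hφS v hv
  have key : ∀ x ∈ S, ∀ y ∈ S, ∀ m ≤ t x, ∀ n ≤ t y, f^[m] x = f^[n] y → m = n ∧ x = y :=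
    fun x hx y hy m hm n hn =>
      Function.iterate_eq_iterate_of_injOn hfS (hφinj.congr hf) hx hy
        (fun i hi => (ht x hx).2 i (hi.trans_le hm)) (fun i hi => (ht y hy).2 i (hi.trans_le hn))
  exact ⟨fun x hx y hy hxy m hm n hn h => hxy (key x hx y hy m hm n hn h).2,
    S.sum_le_card_of_injOn_sigma t (fun x i => f^[i] x)
      fun x hx y hy m hm n hn => key x hx y hy m hm.le n hn.le⟩
end

section
/- Let Σ be a finite alphabet, n, ℓ positive integers with ℓ ≤ n, W ⊆ Σ^ℓ a set of forbidden windows, and χ : W → Σ^{ℓ−⌈log_{|Σ|} n⌉−1} an injective function. Define ξ on the set of strings x ∈ Σⁿ containing some window from W by: let i be the minimal index with x_i…x_{i+ℓ−1} ∈ W, and set ξ(x) = x₁…x_{i−1} · x_{i+ℓ}…x_n · p_i · χ(x_i…x_{i+ℓ−1}), where p_i ∈ Σ^{⌈log_{|Σ|} n⌉} injectively encodes i. Then ξ is injective and its image lies in Σ^{n−1}. -/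
/-- Multiple-substring-avoiding (MSA) encoding step: removing the first forbidden
window and appending the encoded index `p i` together with the compressed window
`χ w` is an injective map into strings of length `n − 1`. Words are modelled as
lists over the alphabet `α`; the window of `x` at index `i` is `(x.drop i).take ℓ`. -/
theorem stmt_8 {α : Type*} [Fintype α] (hα : 2 ≤ Fintype.card α)
    (n ℓ : ℕ) (hℓn : ℓ ≤ n) (L : ℕ) (hL : L = Nat.clog (Fintype.card α) n)
    (hLℓ : L + 1 ≤ ℓ)
    (W : Set (List α)) (hW : ∀ w ∈ W, w.length = ℓ)
    (χ : List α → List α) (hχlen : ∀ w ∈ W, (χ w).length = ℓ - L - 1)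
    (hχinj : Set.InjOn χ W)
    (p : ℕ → List α) (hplen : ∀ i, (p i).length = L)
    (hpinj : Set.InjOn p {i : ℕ | i < n})
    (sel : List α → ℕ)
    (hsel : ∀ x : List α, x.length = n →
      (∃ i, i + ℓ ≤ n ∧ (x.drop i).take ℓ ∈ W) →
      sel x + ℓ ≤ n ∧ (x.drop (sel x)).take ℓ ∈ W ∧
        ∀ j < sel x, (x.drop j).take ℓ ∉ W) :
    Set.InjOn
      (fun x => x.take (sel x) ++ x.drop (sel x + ℓ) ++ p (sel x) ++
        χ ((x.drop (sel x)).take ℓ))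
      {x : List α | x.length = n ∧ ∃ i, i + ℓ ≤ n ∧ (x.drop i).take ℓ ∈ W} ∧
    ∀ x ∈ {x : List α | x.length = n ∧ ∃ i, i + ℓ ≤ n ∧ (x.drop i).take ℓ ∈ W},
      (x.take (sel x) ++ x.drop (sel x + ℓ) ++ p (sel x) ++
        χ ((x.drop (sel x)).take ℓ)).length = n - 1 := by

  constructor
  · rintro x ⟨hx, hex⟩ y ⟨hy, hey⟩ heq
    obtain ⟨hxs, hxW, -⟩ := hsel x hx hex
    obtain ⟨hys, hyW, -⟩ := hsel y hy hey
    simp only at heq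
    have hχx := hχlen _ hxW
    have hχy := hχlen _ hyW
    have hsx : sel x ≤ n := by omega
    have hsy : sel y ≤ n := by omega
    have hlen1 : (x.take (sel x) ++ x.drop (sel x + ℓ) ++ p (sel x)).length =
        (y.take (sel y) ++ y.drop (sel y + ℓ) ++ p (sel y)).length := by
      simp only [List.length_append, List.length_take, List.length_drop, hplen, hx, hy]
      omega
    obtain ⟨h1, hχeq⟩ := List.append_inj heq (by exact hlen1 ▸ rfl)
    have hlen2 : (x.take (sel x) ++ x.drop (sel x + ℓ)).length =
        (y.take (sel y) ++ y.drop (sel y + ℓ)).length := by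
      simp only [List.length_append, List.length_take, List.length_drop, hx, hy]
      omega
    obtain ⟨h2, hpeq⟩ := List.append_inj h1 hlen2
    have hieq : sel x = sel y := hpinj (by simp only [Set.mem_setOf_eq]; omega)
      (by simp only [Set.mem_setOf_eq]; omega) hpeq
    have hweq : (x.drop (sel x)).take ℓ = (y.drop (sel y)).take ℓ :=
      hχinj hxW hyW hχeq
    have hlen3 : (x.take (sel x)).length = (y.take (sel y)).length := by
      simp only [List.length_take, hx, hy, hieq]
    obtain ⟨h3, h4⟩ := List.append_inj h2 hlen3
    have hxdec : x = x.take (sel x) ++ ((x.drop (sel x)).take ℓ ++ x.drop (sel x + ℓ)) := by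
      rw [show x.drop (sel x + ℓ) = (x.drop (sel x)).drop ℓ by
        rw [List.drop_drop]]
      rw [List.take_append_drop, List.take_append_drop]
    have hydec : y = y.take (sel y) ++ ((y.drop (sel y)).take ℓ ++ y.drop (sel y + ℓ)) := by
      rw [show y.drop (sel y + ℓ) = (y.drop (sel y)).drop ℓ by
        rw [List.drop_drop]]
      rw [List.take_append_drop, List.take_append_drop]
    rw [hieq] at h4
    rw [hxdec, hydec, h3, hweq, hieq, h4]
  · rintro x ⟨hx, hex⟩
    obtain ⟨hxs, hxW, -⟩ := hsel x hx hex
    have hχx := hχlen _ hxW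
    simp only [List.length_append, List.length_take, List.length_drop, hplen, hx]
    omega
end

section
/- For n > 4 and any k with 0 ≤ k < n/2 − √n, the inequality (1/2 − 1/√n)^k · (1/2 + 1/√n)^{n−k} ≥ 2^{−(n−2)} holds. -/
/-!
With `t = 2/√n` the two factors are `(1 ∓ t)/2`, so the product equals
`2⁻ⁿ (1 - t²)ᵏ (1 + t)ⁿ⁻²ᵏ`, and it suffices that `(1 - t²)ᵏ (1 + t)ⁿ⁻²ᵏ ≥ 4`.
The hypothesis on `k` reads `k t² ≤ 2 - 2t` and `(n - 2k) t ≥ 4`. Taking logarithms, with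
`log (1 - t²) ≥ -t²/(1 - t²)` and `log (1 + t) ≥ 2t/(t + 2)`, the left side is at least
`8/(t + 2) - 2/(1 + t) ≥ 5/3 > log 4` for `0 ≤ t < 1`.
-/

open Real

lemma log_four_lt_five_div_three : log 4 < 5 / 3 := by
  have h : log 4 = 2 * log 2 := by
    rw [show (4 : ℝ) = 2 ^ 2 by norm_num, log_pow, Nat.cast_ofNat]
  linarith [log_two_lt_d9]

lemma neg_two_div_one_add_le_mul_log_one_sub_sq {t : ℝ} {K : ℕ} (ht0 : 0 ≤ t) (ht1 : t < 1)
    (hK : K * t ^ 2 ≤ 2 - 2 * t) : -2 / (1 + t) ≤ K * log (1 - t ^ 2) := by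
  have hpos : 0 < 1 - t ^ 2 := by nlinarith
  calc -2 / (1 + t) = -(2 - 2 * t) / (1 - t ^ 2) := by
        field_simp; ring
    _ ≤ -(K * t ^ 2) / (1 - t ^ 2) := by gcongr
    _ = K * (1 - (1 - t ^ 2)⁻¹) := by field_simp; ring
    _ ≤ K * log (1 - t ^ 2) := by gcongr; exact one_sub_inv_le_log_of_pos hpos

lemma eight_div_add_two_le_mul_log_one_add {t : ℝ} {M : ℕ} (ht0 : 0 ≤ t)
    (hM : 4 ≤ M * t) : 8 / (t + 2) ≤ M * log (1 + t) := by
  calc 8 / (t + 2) ≤ M * t * 2 / (t + 2) := by gcongr; linarith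
    _ = M * (2 * t / (t + 2)) := by ring
    _ ≤ M * log (1 + t) := by gcongr; exact le_log_one_add_of_nonneg ht0

lemma four_le_one_sub_sq_pow_mul_one_add_pow {t : ℝ} {K M : ℕ} (ht0 : 0 ≤ t) (ht1 : t < 1)
    (hK : K * t ^ 2 ≤ 2 - 2 * t) (hM : 4 ≤ M * t) :
    4 ≤ (1 - t ^ 2) ^ K * (1 + t) ^ M := by
  have hK0 : 0 < (1 - t ^ 2) ^ K := pow_pos (by nlinarith) K
  have hM0 : 0 < (1 + t) ^ M := pow_pos (by linarith) M
  have hsum : 5 / 3 ≤ -2 / (1 + t) + 8 / (t + 2) := by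
    rw [div_add_div _ _ (by positivity) (by positivity), le_div_iff₀ (by positivity)]
    nlinarith
  rw [← log_le_log_iff (by norm_num) (mul_pos hK0 hM0), log_mul hK0.ne' hM0.ne', log_pow, log_pow]
  linarith [log_four_lt_five_div_three, neg_two_div_one_add_le_mul_log_one_sub_sq ht0 ht1 hK,
    eight_div_add_two_le_mul_log_one_add (M := M) ht0 hM]

lemma one_sub_div_two_pow_mul_one_add_div_two_pow (t : ℝ) {k n : ℕ} (h : 2 * k ≤ n) :
    ((1 - t) / 2) ^ k * ((1 + t) / 2) ^ (n - k) =
      (1 - t ^ 2) ^ k * (1 + t) ^ (n - 2 * k) / 2 ^ n := by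
  obtain ⟨m, rfl⟩ := Nat.exists_eq_add_of_le h
  rw [show 2 * k + m - k = k + m by omega, show 2 * k + m - 2 * k = m by omega, div_pow, div_pow,
    show (1 - t ^ 2) ^ k = (1 - t) ^ k * (1 + t) ^ k by rw [← mul_pow]; ring]
  field_simp
  ring

/-- Arithmetic-coding interval bound for the almost-balanced construction:
for `n > 4` and `k < n/2 − √n`,
`(1/2 − 1/√n)^k (1/2 + 1/√n)^(n−k) ≥ 2^{−(n−2)}`. -/
theorem stmt_17 (n k : ℕ) (hn : 4 < n)
    (hk : (k : ℝ) < (n : ℝ) / 2 - Real.sqrt n) :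
    ((1 : ℝ) / 2 - 1 / Real.sqrt n) ^ k * (1 / 2 + 1 / Real.sqrt n) ^ (n - k) ≥
      1 / 2 ^ (n - 2) := by
  set s := √(n : ℝ)
  have hs : 2 < s := lt_sqrt_of_sq_lt (by exact_mod_cast hn)
  have hsq : s ^ 2 = n := sq_sqrt (Nat.cast_nonneg n)
  have h2k : 2 * k ≤ n := by exact_mod_cast (show ((2 * k : ℕ) : ℝ) ≤ n by push_cast; linarith)
  have hK : k * (2 / s) ^ 2 ≤ 2 - 2 * (2 / s) := by
    have h : 2 - 2 * (2 / s) - k * (2 / s) ^ 2 = 4 * (s ^ 2 / 2 - s - k) / s ^ 2 := by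
      field_simp; ring
    rw [← sub_nonneg, h, hsq]
    exact div_nonneg (by linarith) (by positivity)
  have hM : 4 ≤ ((n - 2 * k : ℕ) : ℝ) * (2 / s) := by
    rw [Nat.cast_sub h2k, mul_div_assoc', le_div_iff₀ (by linarith)]
    push_cast; linarith
  have hX := four_le_one_sub_sq_pow_mul_one_add_pow (by positivity)
    ((div_lt_one (by linarith)).2 hs) hK hM
  have h2n : (2 : ℝ) ^ n = 2 ^ (n - 2) * 2 ^ 2 := by rw [← pow_add, Nat.sub_add_cancel (by omega)]
  rw [show (1 : ℝ) / 2 - 1 / s = (1 - 2 / s) / 2 by ring,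
    show (1 : ℝ) / 2 + 1 / s = (1 + 2 / s) / 2 by ring,
    one_sub_div_two_pow_mul_one_add_div_two_pow _ h2k, h2n, div_mul_eq_div_div_swap, ge_iff_le]
  gcongr
  rw [le_div_iff₀ (by norm_num)]
  linarith
end
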